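/- arXiv:1111.1739 — 10 statements merged into one kernel-verified Lean document; each statement's English description precedes it below -/
import Mathlib

section
/- 4697 is the largest natural number x such that (355x + 3)/(113x + 1) < π, and (355·4697 + 3)/(113·4697 + 1) = 1667438/530762, (355·4698 + 3)/(113·4698 + 1) = 1667793/530875. -/
open Real

theorem kochanski_second_genitor :
    IsGreatest {x : ℕ | (355 * x + 3 : ℝ) / (113 * x + 1) < π} 4697 ∧
    (355 * 4697 + 3 : ℝ) / (113 * 4697 + 1) = 1667438 / 530762 ∧
    (355 * 4698 + 3 : ℝ) / (113 * 4698 + 1) = 1667793 / 530875 := by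
  have hgt := Real.pi_gt_d20
  have hlt := Real.pi_lt_d20
  refine ⟨⟨?_, ?_⟩, by norm_num, by norm_num⟩
  · show (355 * (4697 : ℕ) + 3 : ℝ) / (113 * (4697 : ℕ) + 1) < π
    push_cast
    rw [div_lt_iff₀ (by norm_num)]
    nlinarith
  · intro x hx
    simp only [Set.mem_setOf_eq] at hx
    by_contra h
    push_neg at h
    have hx' : (4698 : ℝ) ≤ (x : ℝ) := by exact_mod_cast h
    have hden : (0 : ℝ) < 113 * (x : ℝ) + 1 := by positivity
    rw [div_lt_iff₀ hden] at hx
    nlinarith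
end

section
/- Let α be a positive irrational number and R, S positive integers with R/S > α. If the genitor g = ⌊(α − ⌊α⌋)/(R − αS)⌋ is positive, then g is the largest natural number x satisfying (Rx + ⌊α⌋)/(Sx + 1) < α. -/
/-!
For `x ≥ 0` the inequality `(R x + ⌊α⌋) / (S x + 1) < α` rearranges to
`x (R - α S) < α - ⌊α⌋`, i.e. `x < (α - ⌊α⌋) / (R - α S)`. Equality would make
`α = (R x + ⌊α⌋) / (S x + 1)` rational, so for integers `x` this is the same as
`x ≤ ⌊(α - ⌊α⌋) / (R - α S)⌋ = g`.
-/

theorem Irrational.intCast_mul_sub_ne {α : ℝ} (hα : Irrational α) {x R S : ℤ} (n : ℤ)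
    (hx : S * x + 1 ≠ 0) : (x : ℝ) * (R - α * S) ≠ α - n := by
  intro h
  apply (hα.mul_intCast hx).ne_int (x * R + n)
  push_cast
  linarith

theorem add_div_add_one_lt_iff {R S x n α : ℝ} (hx : 0 < S * x + 1) :
    (R * x + n) / (S * x + 1) < α ↔ x * (R - α * S) < α - n := by
  rw [div_lt_iff₀ hx]
  constructor <;> intro h <;> linarith

theorem Int.le_floor_div_iff_mul_lt {K : Type*} [Field K] [LinearOrder K]
    [IsStrictOrderedRing K] [FloorRing K] {x : ℤ} {b d : K} (hd : 0 < d) (hne : x * d ≠ b) :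
    x ≤ ⌊b / d⌋ ↔ x * d < b := by
  rw [Int.le_floor, le_div_iff₀ hd, le_iff_lt_or_eq, or_iff_left hne]

theorem genitor_is_greatest_general (α : ℝ) (hirr : Irrational α)
    (R S : ℤ) (hS : 0 < S) (hRS : α < (R : ℝ) / (S : ℝ))
    (g : ℤ) (hg : g = ⌊(α - ⌊α⌋) / ((R : ℝ) - α * S)⌋) (hgpos : 0 < g) :
    IsGreatest {x : ℕ | ((R : ℝ) * x + ⌊α⌋) / ((S : ℝ) * x + 1) < α} g.toNat := by
  have hD : 0 < (R : ℝ) - α * S := by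
    have := (lt_div_iff₀ (by exact_mod_cast hS : (0 : ℝ) < S)).mp hRS
    linarith
  have hmem : ∀ x : ℕ, ((R : ℝ) * x + ⌊α⌋) / ((S : ℝ) * x + 1) < α ↔ (x : ℤ) ≤ g := by
    intro x
    have hden : (0 : ℤ) < S * x + 1 := by positivity
    have hne := hirr.intCast_mul_sub_ne (R := R) ⌊α⌋ hden.ne'
    rw [Int.cast_natCast] at hne
    rw [add_div_add_one_lt_iff (by exact_mod_cast hden), hg,
      Int.le_floor_div_iff_mul_lt hD (by exact_mod_cast hne), Int.cast_natCast]
  refine ⟨(hmem _).2 (by omega), fun x hx => ?_⟩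
  have := (hmem x).1 hx
  omega

/-- If the genitor `g = ⌊(α − ⌊α⌋)/(R − αS)⌋` is positive, it is the largest
natural number `x` with `(Rx + ⌊α⌋)/(Sx + 1) < α`. -/
theorem genitor_is_greatest (α : ℝ) (hα : 0 < α) (hirr : Irrational α)
    (R S : ℤ) (hR : 0 < R) (hS : 0 < S) (hRS : α < (R : ℝ) / (S : ℝ))
    (g : ℤ) (hg : g = ⌊(α - ⌊α⌋) / ((R : ℝ) - α * S)⌋) (hgpos : 0 < g) :
    IsGreatest {x : ℕ | ((R : ℝ) * x + ⌊α⌋) / ((S : ℝ) * x + 1) < α} g.toNat :=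
  genitor_is_greatest_general α hirr R S hS hRS g hg hgpos
end

section
/- Let α be a positive irrational number and R, S positive integers with R/S > α, and suppose g = g_α(R,S) = ⌊(α − ⌊α⌋)/(R − αS)⌋ is positive. Then ⌊α⌋ < (Rg + ⌊α⌋)/(Sg + 1) < α < (R(g+1) + ⌊α⌋)/(S(g+1) + 1) < R/S. -/
theorem genitor_inequalities (α : ℝ) (hα : 0 < α) (hirr : Irrational α)
    (R S : ℤ) (hR : 0 < R) (hS : 0 < S) (hRS : α < (R : ℝ) / (S : ℝ))
    (g : ℤ) (hg : g = ⌊(α - ⌊α⌋) / ((R : ℝ) - α * S)⌋) (hgpos : 0 < g) :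
    (⌊α⌋ : ℝ) < ((R : ℝ) * g + ⌊α⌋) / ((S : ℝ) * g + 1) ∧
    ((R : ℝ) * g + ⌊α⌋) / ((S : ℝ) * g + 1) < α ∧
    α < ((R : ℝ) * (g + 1) + ⌊α⌋) / ((S : ℝ) * (g + 1) + 1) ∧
    ((R : ℝ) * (g + 1) + ⌊α⌋) / ((S : ℝ) * (g + 1) + 1) < (R : ℝ) / S := by
  have hSr : (0:ℝ) < (S:ℝ) := by exact_mod_cast hS
  have hRr : (0:ℝ) < (R:ℝ) := by exact_mod_cast hR
  have hgr : (1:ℝ) ≤ (g:ℝ) := by exact_mod_cast hgpos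
  have hn : (⌊α⌋ : ℝ) < α := by
    rcases (Int.floor_le α).lt_or_eq with h | h
    · exact h
    · exact absurd h (hirr.ne_int ⌊α⌋).symm
  have hd : (0:ℝ) < (R:ℝ) - α * S := by
    have := (lt_div_iff₀ hSr).mp hRS
    linarith
  have hfl : (g:ℝ) ≤ (α - ⌊α⌋) / ((R : ℝ) - α * S) := by
    rw [hg]; exact Int.floor_le _
  have hfu : (α - ⌊α⌋) / ((R : ℝ) - α * S) < (g:ℝ) + 1 := by
    rw [hg]; push_cast; exact Int.lt_floor_add_one _
  have hle : (g:ℝ) * ((R:ℝ) - α * S) ≤ α - ⌊α⌋ := by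
    rw [← le_div_iff₀ hd] at *; exact hfl
  have hub : α - ⌊α⌋ < ((g:ℝ) + 1) * ((R:ℝ) - α * S) := by
    rw [← div_lt_iff₀ hd] at *; exact hfu
  have hne : (g:ℝ) * ((R:ℝ) - α * S) ≠ α - ⌊α⌋ := by
    intro h
    have hden : ((S * g + 1 : ℤ):ℝ) ≠ 0 := by
      have : (0:ℤ) < S * g + 1 := by positivity
      exact_mod_cast this.ne'
    have : α = ((R * g + ⌊α⌋ : ℤ):ℝ) / ((S * g + 1 : ℤ):ℝ) := by
      rw [eq_div_iff hden]; push_cast; nlinarith [h]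
    exact (hirr.ne_rat ((R * g + ⌊α⌋ : ℤ) / (S * g + 1 : ℤ) : ℚ))
      (this.trans (by push_cast; ring))
  have hlt : (g:ℝ) * ((R:ℝ) - α * S) < α - ⌊α⌋ := lt_of_le_of_ne hle hne
  have hden1 : (0:ℝ) < (S:ℝ) * g + 1 := by nlinarith
  have hden2 : (0:ℝ) < (S:ℝ) * ((g:ℝ) + 1) + 1 := by nlinarith
  have hnS : (⌊α⌋:ℝ) * S < R := by
    have h1 : (⌊α⌋:ℝ) * S < α * S := by nlinarith
    have h2 : α * S < R := by
      have := (lt_div_iff₀ hSr).mp hRS; linarith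
    linarith
  refine ⟨?_, ?_, ?_, ?_⟩
  · rw [lt_div_iff₀ hden1]; nlinarith
  · rw [div_lt_iff₀ hden1]; nlinarith
  · rw [lt_div_iff₀ hden2]; nlinarith
  · rw [div_lt_div_iff₀ hden2 hSr]; nlinarith
end

section
/- In the Kochański recursion, the genitor sequence x_n = ⌊(α − ⌊α⌋)/(R_n − αS_n)⌋ is non-decreasing; equivalently, the sequence R_n − αS_n is non-increasing (and positive). -/
/-- The genitor sequence is non-decreasing; equivalently `R n − α·S n` is
non-increasing (and positive). -/
theorem kochanski_genitores_monotone (α : ℝ) (hα : 0 < α) (hirr : Irrational α)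
    (R S P Q x : ℕ → ℤ)
    (hR0 : 0 < R 0) (hS0 : 0 < S 0)
    (hfrac : α < (R 0 : ℝ) / (S 0 : ℝ))
    (hx : ∀ n, x n = ⌊(α - ⌊α⌋) / ((R n : ℝ) - α * (S n : ℝ))⌋)
    (hx0 : 0 < x 0)
    (hR : ∀ n, R (n + 1) = R n * (x n + 1) + ⌊α⌋)
    (hS : ∀ n, S (n + 1) = S n * (x n + 1) + 1)
    (hP : ∀ n, P (n + 1) = R n * x n + ⌊α⌋)
    (hQ : ∀ n, Q (n + 1) = S n * x n + 1) :
    (∀ n, x n ≤ x (n + 1)) ∧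
    (∀ n, (R (n + 1) : ℝ) - α * S (n + 1) ≤ (R n : ℝ) - α * S n) ∧
    (∀ n, 0 < (R n : ℝ) - α * S n) := by
  set β : ℝ := α - ⌊α⌋ with hβdef
  have hβ : 0 < β := by
    have h1 : ((⌊α⌋ : ℤ) : ℝ) ≤ α := Int.floor_le α
    have h2 : ((⌊α⌋ : ℤ) : ℝ) ≠ α := fun h => hirr ⟨⌊α⌋, h⟩
    have := lt_of_le_of_ne h1 h2
    rw [hβdef]; linarith
  set e : ℕ → ℝ := fun n => (R n : ℝ) - α * S n with he
  have hrec : ∀ n, e (n + 1) = e n * (x n + 1) - β := by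
    intro n
    simp only [he, hR n, hS n]
    push_cast
    ring
  have hepos : ∀ n, 0 < e n := by
    intro n
    induction n with
    | zero =>
      have hS0' : (0 : ℝ) < (S 0 : ℝ) := by exact_mod_cast hS0
      have h : α * S 0 < R 0 := by
        have := (lt_div_iff₀ hS0').mp hfrac
        linarith
      simp only [he]; linarith
    | succ n ih =>
      have hx' : (β / e n : ℝ) < (x n : ℝ) + 1 := by
        rw [hx n]; exact Int.lt_floor_add_one _
      have : β < e n * ((x n : ℝ) + 1) := by
        rw [div_lt_iff₀ ih] at hx'
        linarith [hx']
      rw [hrec n]; linarith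
  have hanti : ∀ n, e (n + 1) ≤ e n := by
    intro n
    have hfl : (x n : ℝ) ≤ β / e n := by
      rw [hx n]; exact Int.floor_le _
    have : e n * (x n : ℝ) ≤ β := by
      rw [le_div_iff₀ (hepos n)] at hfl
      linarith
    rw [hrec n]
    nlinarith [hepos n]
  have hmono : ∀ n, x n ≤ x (n + 1) := by
    intro n
    rw [hx n, hx (n + 1)]
    apply Int.floor_mono
    have h1 : β / e n ≤ β / e (n + 1) :=
      div_le_div_of_nonneg_left hβ.le (hepos (n + 1)) (hanti n)
    simpa [he] using h1
  exact ⟨hmono, hanti, hepos⟩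
end

section
/- For all n ≥ 1, the Kochański approximants satisfy ⌊α⌋ < P_n/Q_n < α < R_n/S_n < R₀/S₀. -/
theorem kochanski_approximant_bounds (α : ℝ) (hα : 0 < α) (hirr : Irrational α)
    (R S P Q x : ℕ → ℤ)
    (hR0 : 0 < R 0) (hS0 : 0 < S 0)
    (hfrac : α < (R 0 : ℝ) / (S 0 : ℝ))
    (hx : ∀ n, x n = ⌊(α - ⌊α⌋) / ((R n : ℝ) - α * (S n : ℝ))⌋)
    (hx0 : 0 < x 0)
    (hR : ∀ n, R (n + 1) = R n * (x n + 1) + ⌊α⌋)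
    (hS : ∀ n, S (n + 1) = S n * (x n + 1) + 1)
    (hP : ∀ n, P (n + 1) = R n * x n + ⌊α⌋)
    (hQ : ∀ n, Q (n + 1) = S n * x n + 1) :
    ∀ n : ℕ, 1 ≤ n →
      (⌊α⌋ : ℝ) < (P n : ℝ) / (Q n : ℝ) ∧
      (P n : ℝ) / (Q n : ℝ) < α ∧
      α < (R n : ℝ) / (S n : ℝ) ∧
      (R n : ℝ) / (S n : ℝ) < (R 0 : ℝ) / (S 0 : ℝ) := by
  have hfpos : (0:ℝ) < α - ⌊α⌋ := by
    rw [Int.self_sub_floor]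
    exact Int.fract_pos.mpr (hirr.ne_int _)
  -- main invariant
  have key : ∀ n, 0 < S n ∧ 0 < (R n : ℝ) - α * S n ∧ 1 ≤ x n := by
    intro n
    induction n with
    | zero =>
      refine ⟨hS0, ?_, hx0⟩
      have hS0' : (0:ℝ) < S 0 := by exact_mod_cast hS0
      have := (lt_div_iff₀ hS0').mp hfrac
      linarith
    | succ n ih =>
      obtain ⟨hSn, hDn, hxn⟩ := ih
      have hSn' : (0:ℝ) < S n := by exact_mod_cast hSn
      have hxn' : (1:ℝ) ≤ x n := by exact_mod_cast hxn
      have hle : (x n : ℝ) ≤ (α - ⌊α⌋) / ((R n : ℝ) - α * S n) := by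
        rw [hx n]; exact Int.floor_le _
      have hlt : (α - ⌊α⌋) / ((R n : ℝ) - α * S n) < x n + 1 := by
        rw [hx n]; exact Int.lt_floor_add_one _
      have hxD : (x n : ℝ) * ((R n : ℝ) - α * S n) ≤ α - ⌊α⌋ :=
        (le_div_iff₀ hDn).mp hle
      have hfD : α - ⌊α⌋ < ((x n : ℝ) + 1) * ((R n : ℝ) - α * S n) := by
        have := (div_lt_iff₀ hDn).mp hlt
        linarith [this]
      have hS1 : 0 < S (n+1) := by rw [hS n]; nlinarith [hSn, hxn]
      have hD1 : 0 < (R (n+1) : ℝ) - α * S (n+1) := by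
        rw [hR n, hS n]; push_cast; nlinarith [hfD]
      refine ⟨hS1, hD1, ?_⟩
      have hD1le : (R (n+1) : ℝ) - α * S (n+1) ≤ α - ⌊α⌋ := by
        rw [hR n, hS n]; push_cast
        nlinarith [hxD, mul_le_mul_of_nonneg_right hxn' (le_of_lt hDn)]
      rw [hx (n+1)]
      exact Int.le_floor.mpr (by push_cast; exact (le_div_iff₀ hD1).mpr (by linarith))
  -- one-step decrease of R/S
  have hstep : ∀ n, (R (n+1) : ℝ) / S (n+1) < (R n : ℝ) / S n := by
    intro n
    obtain ⟨hSn, hDn, hxn⟩ := key n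
    obtain ⟨hSn1, -, -⟩ := key (n+1)
    have hSn' : (0:ℝ) < S n := by exact_mod_cast hSn
    have hSn1' : (0:ℝ) < S (n+1) := by exact_mod_cast hSn1
    have hxn' : (1:ℝ) ≤ x n := by exact_mod_cast hxn
    rw [div_lt_div_iff₀ hSn1' hSn', hR n, hS n]
    push_cast
    have h1 : (⌊α⌋:ℝ) * S n < (R n : ℝ) := by nlinarith [mul_pos hfpos hSn']
    nlinarith [h1]
  intro n hn
  induction n with
  | zero => omega
  | succ m ihm =>
    obtain ⟨hSm, hDm, hxm⟩ := key m
    obtain ⟨hSm1, hDm1, -⟩ := key (m+1)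
    have hSm' : (0:ℝ) < S m := by exact_mod_cast hSm
    have hSm1' : (0:ℝ) < S (m+1) := by exact_mod_cast hSm1
    have hxm' : (1:ℝ) ≤ x m := by exact_mod_cast hxm
    have hQpos : (0:ℝ) < (Q (m+1) : ℝ) := by
      rw [hQ m]; push_cast; nlinarith [hSm', hxm']
    -- strictness: x m * D m < α - ⌊α⌋
    have hle : (x m : ℝ) ≤ (α - ⌊α⌋) / ((R m : ℝ) - α * S m) := by
      rw [hx m]; exact Int.floor_le _
    have hxD : (x m : ℝ) * ((R m : ℝ) - α * S m) ≤ α - ⌊α⌋ :=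
      (le_div_iff₀ hDm).mp hle
    have hxDlt : (x m : ℝ) * ((R m : ℝ) - α * S m) < α - ⌊α⌋ := by
      rcases lt_or_eq_of_le hxD with h | h
      · exact h
      · exfalso
        have hc' : (1 + (x m : ℝ) * S m) ≠ 0 := by nlinarith [hxm', hSm']
        apply hirr
        refine ⟨((x m * R m + ⌊α⌋ : ℤ) : ℚ) / ((1 + x m * S m : ℤ) : ℚ), ?_⟩
        push_cast
        rw [div_eq_iff hc']
        linear_combination h
    constructor
    · -- ⌊α⌋ < P/Q
      rw [lt_div_iff₀ hQpos, hP m, hQ m]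
      push_cast
      have h3 : (0:ℝ) < (R m:ℝ) - ⌊α⌋ * S m := by nlinarith [mul_pos hfpos hSm']
      nlinarith [mul_pos (by linarith : (0:ℝ) < (x m : ℝ)) h3]
    refine ⟨?_, ?_, ?_⟩
    · -- P/Q < α
      rw [div_lt_iff₀ hQpos, hP m, hQ m]
      push_cast
      nlinarith [hxDlt]
    · -- α < R/S
      rw [lt_div_iff₀ hSm1']
      linarith [hDm1]
    · -- R/S < R0/S0
      rcases Nat.eq_zero_or_pos m with hm0 | hm1
      · subst hm0; exact hstep 0
      · exact (hstep m).trans (ihm hm1).2.2.2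
end

section
/- The sequence of upper Kochański approximants R_n/S_n is strictly decreasing. -/
theorem kochanski_upper_decreasing (α : ℝ) (hα : 0 < α) (hirr : Irrational α)
    (R S P Q x : ℕ → ℤ)
    (hR0 : 0 < R 0) (hS0 : 0 < S 0)
    (hfrac : α < (R 0 : ℝ) / (S 0 : ℝ))
    (hx : ∀ n, x n = ⌊(α - ⌊α⌋) / ((R n : ℝ) - α * (S n : ℝ))⌋)
    (hx0 : 0 < x 0)
    (hR : ∀ n, R (n + 1) = R n * (x n + 1) + ⌊α⌋)
    (hS : ∀ n, S (n + 1) = S n * (x n + 1) + 1)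
    (hP : ∀ n, P (n + 1) = R n * x n + ⌊α⌋)
    (hQ : ∀ n, Q (n + 1) = S n * x n + 1) :
    StrictAnti (fun n => (R n : ℝ) / (S n : ℝ)) := by
  have hfl : (⌊α⌋ : ℝ) ≤ α := Int.floor_le α
  have hf : 0 < α - (⌊α⌋ : ℝ) := by
    have hne : α ≠ (⌊α⌋ : ℝ) := hirr.ne_int ⌊α⌋
    cases lt_or_eq_of_le hfl with
    | inl h => linarith
    | inr h => exact absurd h.symm hne
  have key : ∀ n, 0 < (S n : ℝ) ∧ 0 < (R n : ℝ) - α * (S n : ℝ) := by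
    intro n
    induction n with
    | zero =>
      have hS0' : (0:ℝ) < (S 0 : ℝ) := by exact_mod_cast hS0
      refine ⟨hS0', ?_⟩
      have := (lt_div_iff₀ hS0').mp hfrac
      linarith
    | succ n ih =>
      obtain ⟨hSpos, hDpos⟩ := ih
      have hxcast : (x n : ℝ) = (⌊(α - ⌊α⌋) / ((R n : ℝ) - α * (S n : ℝ))⌋ : ℝ) := by
        exact_mod_cast congrArg (fun z : ℤ => (z : ℝ)) (hx n)
      have hxlb : (α - ⌊α⌋) / ((R n : ℝ) - α * (S n : ℝ)) < (x n : ℝ) + 1 := by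
        rw [hxcast]; exact Int.lt_floor_add_one _
      have hxnn : (0:ℝ) ≤ (x n : ℝ) := by
        rw [hxcast]
        have : (0:ℤ) ≤ ⌊(α - ⌊α⌋) / ((R n : ℝ) - α * (S n : ℝ))⌋ := by
          apply Int.floor_nonneg.mpr
          positivity
        exact_mod_cast this
      have hkey : α - (⌊α⌋:ℝ) < ((R n : ℝ) - α * (S n : ℝ)) * ((x n : ℝ) + 1) := by
        have := (div_lt_iff₀ hDpos).mp hxlb
        linarith
      constructor
      · rw [hS n]; push_cast; nlinarith
      · rw [hR n, hS n]; push_cast; nlinarith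
  apply strictAnti_nat_of_succ_lt
  intro n
  obtain ⟨hSn, hDn⟩ := key n
  obtain ⟨hSn1, _⟩ := key (n + 1)
  show (R (n+1) : ℝ) / (S (n+1) : ℝ) < (R n : ℝ) / (S n : ℝ)
  rw [div_lt_div_iff₀ hSn1 hSn]
  have h1 : ((R (n+1) : ℝ)) = (R n : ℝ) * ((x n : ℝ) + 1) + (⌊α⌋ : ℝ) := by
    rw [hR n]; push_cast; ring
  have h2 : ((S (n+1) : ℝ)) = (S n : ℝ) * ((x n : ℝ) + 1) + 1 := by
    rw [hS n]; push_cast; ring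
  rw [h1, h2]
  nlinarith
end

section
/- Both sequences of Kochański approximants converge to α: lim R_n/S_n = lim P_n/Q_n = α. -/
/-!
Write `e n = R n - α * S n` and `f = α - ⌊α⌋`. The recursion gives `e (n + 1) = (x n + 1) * e n - f`,
and `x n = ⌊f / e n⌋` is precisely the choice keeping `0 < e (n + 1) ≤ e n`. Together with `x 0 ≥ 1`
this yields `0 < e n ≤ f` for all `n`, hence `x n ≥ 1` and `S n ≥ n + 1`, so
`|R n / S n - α| = e n / S n ≤ f / (n + 1)`. Similarly `P (n + 1) - α * Q (n + 1) = x n * e n - f`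
has absolute value below `e n ≤ f`, while `Q (n + 1) > S n`.
-/

open Filter Topology

lemma floor_div_mul_le_and_lt_add_one_mul {f d : ℝ} (hd : 0 < d) :
    (⌊f / d⌋ : ℝ) * d ≤ f ∧ f < (⌊f / d⌋ + 1) * d :=
  ⟨(le_div_iff₀ hd).mp (Int.floor_le _), (div_lt_iff₀ hd).mp (Int.lt_floor_add_one _)⟩

lemma abs_mul_floor_div_sub_lt {f d : ℝ} (hd : 0 < d) : |d * ⌊f / d⌋ - f| < d := by
  obtain ⟨hle, hlt⟩ := floor_div_mul_le_and_lt_add_one_mul (f := f) hd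
  rw [abs_lt]
  constructor <;> linarith

lemma one_le_floor_div {f d : ℝ} (hd : 0 < d) (hdf : d ≤ f) : 1 ≤ ⌊f / d⌋ :=
  Int.le_floor.mpr (by exact_mod_cast (one_le_div hd).mpr hdf)

lemma tendsto_div_of_abs_sub_mul_le {α C : ℝ} {p q : ℕ → ℝ}
    (hpq : ∀ n, |p n - α * q n| ≤ C) (hq : ∀ n : ℕ, (n : ℝ) + 1 ≤ q n) :
    Tendsto (fun n => p n / q n) atTop (𝓝 α) := by
  have hC : 0 ≤ C := (abs_nonneg _).trans (hpq 0)
  have hbound : ∀ n : ℕ, dist (p n / q n) α ≤ C * (1 / ((n : ℝ) + 1)) := by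
    intro n
    have hq0 : 0 < q n := by linarith [hq n, n.cast_nonneg (α := ℝ)]
    rw [Real.dist_eq, div_sub' hq0.ne', abs_div, abs_of_pos hq0, mul_one_div, mul_comm]
    exact div_le_div₀ hC (hpq n) (by positivity) (hq n)
  rw [tendsto_iff_dist_tendsto_zero]
  refine squeeze_zero (fun n => dist_nonneg) hbound ?_
  simpa using tendsto_one_div_add_atTop_nhds_zero_nat.const_mul C

namespace Kochanski

lemma cast_mul_add_sub_mul_cast (α : ℝ) (r s k m : ℤ) :
    ((r * k + m : ℤ) : ℝ) - α * ((s * k + 1 : ℤ) : ℝ) = (r - α * s) * k - (α - m) := by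
  push_cast
  ring

variable {α : ℝ} {m : ℤ} {R S x : ℕ → ℤ}

lemma approxError_pos_and_le (hS0 : 0 < S 0) (hfrac : α < (R 0 : ℝ) / (S 0 : ℝ))
    (hx : ∀ n, x n = ⌊(α - m) / ((R n : ℝ) - α * (S n : ℝ))⌋) (hx0 : 0 < x 0)
    (hR : ∀ n, R (n + 1) = R n * (x n + 1) + m) (hS : ∀ n, S (n + 1) = S n * (x n + 1) + 1) :
    ∀ n, 0 < (R n : ℝ) - α * S n ∧ (R n : ℝ) - α * S n ≤ α - m := by
  intro n
  induction n with
  | zero =>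
    have hpos : 0 < (R 0 : ℝ) - α * S 0 := by
      have := (lt_div_iff₀ (by exact_mod_cast hS0 : (0 : ℝ) < S 0)).mp hfrac
      linarith
    have hx1 : (1 : ℝ) ≤ x 0 := by exact_mod_cast hx0
    have hle := (floor_div_mul_le_and_lt_add_one_mul (f := α - m) hpos).1
    rw [← hx 0] at hle
    exact ⟨hpos, by nlinarith⟩
  | succ n ih =>
    obtain ⟨hpos, hle⟩ := ih
    obtain ⟨hlo, hhi⟩ := floor_div_mul_le_and_lt_add_one_mul (f := α - m) hpos
    rw [← hx n] at hlo hhi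
    rw [hR, hS, cast_mul_add_sub_mul_cast]
    push_cast
    constructor <;> nlinarith

lemma add_one_le_of_succ_eq_mul_add_one (hS0 : 0 < S 0) (hx : ∀ n, 0 ≤ x n)
    (hS : ∀ n, S (n + 1) = S n * (x n + 1) + 1) (n : ℕ) : (n : ℤ) + 1 ≤ S n := by
  induction n with
  | zero => simp only [Nat.cast_zero, zero_add]; exact hS0
  | succ n ih =>
    rw [hS]
    push_cast
    nlinarith [hx n]

end Kochanski

open Kochanski

theorem kochanski_convergence_general (α : ℝ)
    (R S P Q x : ℕ → ℤ)
    (hS0 : 0 < S 0)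
    (hfrac : α < (R 0 : ℝ) / (S 0 : ℝ))
    (hx : ∀ n, x n = ⌊(α - ⌊α⌋) / ((R n : ℝ) - α * (S n : ℝ))⌋)
    (hx0 : 0 < x 0)
    (hR : ∀ n, R (n + 1) = R n * (x n + 1) + ⌊α⌋)
    (hS : ∀ n, S (n + 1) = S n * (x n + 1) + 1)
    (hP : ∀ n, P (n + 1) = R n * x n + ⌊α⌋)
    (hQ : ∀ n, Q (n + 1) = S n * x n + 1) :
    Tendsto (fun n => (R n : ℝ) / (S n : ℝ)) atTop (nhds α) ∧
    Tendsto (fun n => (P n : ℝ) / (Q n : ℝ)) atTop (nhds α) := by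
  have herr := approxError_pos_and_le hS0 hfrac hx hx0 hR hS
  have hx1 : ∀ n, 1 ≤ x n := fun n => (hx n).symm ▸ one_le_floor_div (herr n).1 (herr n).2
  have hSn : ∀ n : ℕ, (n : ℤ) + 1 ≤ S n :=
    add_one_le_of_succ_eq_mul_add_one hS0 (fun n => by linarith [hx1 n]) hS
  constructor
  · refine tendsto_div_of_abs_sub_mul_le (C := α - ⌊α⌋) (fun n => ?_) (fun n => ?_)
    · rw [abs_of_pos (herr n).1]
      exact (herr n).2
    · exact_mod_cast hSn n
  · rw [← tendsto_add_atTop_iff_nat 1]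
    refine tendsto_div_of_abs_sub_mul_le (C := α - ⌊α⌋) (fun n => ?_) (fun n => ?_)
    · rw [hP, hQ, cast_mul_add_sub_mul_cast, hx n]
      exact (abs_mul_floor_div_sub_lt (herr n).1).le.trans (herr n).2
    · have : (n : ℤ) + 1 ≤ Q (n + 1) := by nlinarith [hQ n, hSn n, hx1 n]
      exact_mod_cast this

theorem kochanski_convergence (α : ℝ) (hα : 0 < α) (hirr : Irrational α)
    (R S P Q x : ℕ → ℤ)
    (hR0 : 0 < R 0) (hS0 : 0 < S 0)
    (hfrac : α < (R 0 : ℝ) / (S 0 : ℝ))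
    (hx : ∀ n, x n = ⌊(α - ⌊α⌋) / ((R n : ℝ) - α * (S n : ℝ))⌋)
    (hx0 : 0 < x 0)
    (hR : ∀ n, R (n + 1) = R n * (x n + 1) + ⌊α⌋)
    (hS : ∀ n, S (n + 1) = S n * (x n + 1) + 1)
    (hP : ∀ n, P (n + 1) = R n * x n + ⌊α⌋)
    (hQ : ∀ n, Q (n + 1) = S n * x n + 1) :
    Tendsto (fun n => (R n : ℝ) / (S n : ℝ)) atTop (nhds α) ∧
    Tendsto (fun n => (P n : ℝ) / (Q n : ℝ)) atTop (nhds α) :=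
  kochanski_convergence_general α R S P Q x hS0 hfrac hx hx0 hR hS hP hQ
end

section
/- If p/q is an odd-indexed continued-fraction convergent p_{2k+1}/q_{2k+1} of a positive irrational α, then p − αq < α − ⌊α⌋, and consequently the genitor g_α(p, q) = ⌊(α − ⌊α⌋)/(p − αq)⌋ is positive. -/
/-!
Let `q'` be the denominator preceding `q = q_{2k+1}`, `ξ > 1` the complete quotient following it and
`{α} = α − ⌊α⌋`. The determinant identity gives `p − αq = 1 / (ξ q + q')`, positive because the index
is odd, and `ξ q + q' > q_1 + q_0 = ⌊1 / {α}⌋ + 1 > 1 / {α}` because the denominators increase.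
Hence `0 < p − αq < {α}`, so `{α} / (p − αq) ≥ 1`.
-/

open GenContFract
open GenContFract (of)

namespace GenContFract

variable {K : Type*} [Field K] [LinearOrder K] [IsStrictOrderedRing K] [FloorRing K] {v : K}

theorem of_dens_monotone : Monotone (of v).dens :=
  monotone_nat_of_le_succ fun _ => of_den_mono

theorem one_le_of_den (n : ℕ) : 1 ≤ (of v).dens n :=
  zeroth_den_eq_one.symm.le.trans (of_dens_monotone n.zero_le)

theorem inv_fract_lt_mul_dens_succ_add_dens (h : Int.fract v ≠ 0) {ξ : K} (hξ : 1 < ξ) (n : ℕ) :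
    (Int.fract v)⁻¹ < ξ * (of v).dens (n + 1) + (of v).dens n :=
  calc (Int.fract v)⁻¹ < ⌊(Int.fract v)⁻¹⌋ + 1 := Int.lt_floor_add_one _
    _ = (of v).dens 1 + (of v).dens 0 := by rw [first_den_eq (of_s_head h), zeroth_den_eq_one]
    _ ≤ (of v).dens (n + 1) + (of v).dens n := by
      grw [of_dens_monotone (by omega : 1 ≤ n + 1), of_dens_monotone n.zero_le]
    _ < ξ * (of v).dens (n + 1) + (of v).dens n := by
      gcongr
      exact lt_mul_of_one_lt_left (zero_lt_one.trans_le (one_le_of_den _)) hξ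

/-- `ξ` is the complete quotient `1 / fr` at step `n + 1` of the continued-fraction algorithm. -/
theorem exists_nums_sub_mul_dens_eq {n : ℕ} (hnt : ¬(of v).TerminatedAt (n + 1)) :
    ∃ ξ : K, 1 < ξ ∧ (of v).nums (n + 1) - v * (of v).dens (n + 1) =
      (-1) ^ n / (ξ * (of v).dens (n + 1) + (of v).dens n) := by
  obtain ⟨ifp', hifp'⟩ := Option.ne_none_iff_exists'.mp
    (mt of_terminatedAt_n_iff_succ_nth_intFractPair_stream_eq_none.mpr hnt)
  obtain ⟨ifp, hifp, hfr, -⟩ := IntFractPair.succ_nth_stream_eq_some_iff.mp hifp'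
  have hfr_pos : 0 < ifp.fr := (IntFractPair.nth_stream_fr_nonneg hifp).lt_of_ne' hfr
  refine ⟨ifp.fr⁻¹, one_lt_inv₀ hfr_pos |>.mpr (IntFractPair.nth_stream_fr_lt_one hifp), ?_⟩
  have herr := sub_convs_eq hifp
  simp only [if_neg hfr, conv_eq_num_div_den, ← nth_cont_eq_succ_nth_contAux,
    ← den_eq_conts_b] at herr
  have hq : 0 < (of v).dens (n + 1) := zero_lt_one.trans_le (one_le_of_den _)
  have hD : 0 < (of v).dens (n + 1) + ifp.fr * (of v).dens n :=
    add_pos_of_pos_of_nonneg hq (mul_nonneg hfr_pos.le zero_le_of_den)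
  field_simp at herr ⊢
  linear_combination -herr

end GenContFract

theorem Irrational.not_terminatedAt {α : ℝ} (hirr : Irrational α) (n : ℕ) :
    ¬(of α).TerminatedAt n := fun h =>
  have ⟨r, hr⟩ := (terminates_iff_rat α).mp ⟨n, h⟩
  hirr.ne_rat r hr

theorem odd_convergent_genitor_pos_general (α : ℝ) (hirr : Irrational α)
    (k : ℕ) (p q : ℝ)
    (hp : p = (GenContFract.of α).nums (2 * k + 1))
    (hq : q = (GenContFract.of α).dens (2 * k + 1)) :
    p - α * q < α - ⌊α⌋ ∧ 0 < ⌊(α - ⌊α⌋) / (p - α * q)⌋ := by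
  have hfract : 0 < Int.fract α := Int.fract_pos.mpr (hirr.ne_int ⌊α⌋)
  obtain ⟨ξ, hξ, herr⟩ := exists_nums_sub_mul_dens_eq (hirr.not_terminatedAt (2 * k + 1))
  rw [← hp, ← hq, (even_two_mul k).neg_one_pow] at herr
  have hD := inv_fract_lt_mul_dens_succ_add_dens hfract.ne' hξ (2 * k)
  rw [← hq] at hD
  have hD_pos := (inv_pos.mpr hfract).trans hD
  have hpos : 0 < p - α * q := by rw [herr]; exact one_div_pos.mpr hD_pos
  have hlt : p - α * q < Int.fract α := by
    rwa [herr, one_div_lt hD_pos hfract, one_div]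
  rw [Int.self_sub_floor]
  exact ⟨hlt, Int.floor_pos.mpr ((one_le_div hpos).mpr hlt.le)⟩

/-- An odd-indexed convergent `p/q = p_{2k+1}/q_{2k+1}` of a positive irrational `α`
satisfies `p − αq < α − ⌊α⌋`, hence its genitor is positive. -/
theorem odd_convergent_genitor_pos (α : ℝ) (hα : 0 < α) (hirr : Irrational α)
    (k : ℕ) (p q : ℝ)
    (hp : p = (GenContFract.of α).nums (2 * k + 1))
    (hq : q = (GenContFract.of α).dens (2 * k + 1)) :
    p - α * q < α - ⌊α⌋ ∧ 0 < ⌊(α - ⌊α⌋) / (p - α * q)⌋ :=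
  odd_convergent_genitor_pos_general α hirr k p q hp hq
end

section
/- For α = √2 with R₀ = 3, S₀ = 2, the first three genitores of the Kochański recursion are x₀ = 2, x₁ = 4, x₂ = 4; in particular the genitor sequence is not strictly increasing. -/
lemma floor_div_eq (a b : ℝ) (n : ℤ) (hb : 0 < b) (h1 : (n : ℝ) * b ≤ a)
    (h2 : a < (n + 1) * b) : ⌊a / b⌋ = n := by
  rw [Int.floor_eq_iff]
  constructor
  · rw [le_div_iff₀ hb]; exact h1
  · rw [div_lt_iff₀ hb]; push_cast; exact h2

theorem kochanski_sqrt2_genitores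
    (R S x : ℕ → ℤ) (hR0 : R 0 = 3) (hS0 : S 0 = 2)
    (hx : ∀ n, x n = ⌊(Real.sqrt 2 - 1) / ((R n : ℝ) - Real.sqrt 2 * (S n : ℝ))⌋)
    (hR : ∀ n, R (n + 1) = R n * (x n + 1) + 1)
    (hS : ∀ n, S (n + 1) = S n * (x n + 1) + 1) :
    x 0 = 2 ∧ x 1 = 4 ∧ x 2 = 4 ∧ ¬ StrictMono x := by
  have hs : Real.sqrt 2 ^ 2 = 2 := Real.sq_sqrt (by norm_num)
  have hs0 : (0:ℝ) ≤ Real.sqrt 2 := Real.sqrt_nonneg 2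
  have hx0 : x 0 = 2 := by
    rw [hx 0, hR0, hS0]
    apply floor_div_eq <;> push_cast <;> nlinarith [hs, hs0]
  have hR1 : R 1 = 10 := by rw [hR 0, hR0, hx0]; ring
  have hS1 : S 1 = 7 := by rw [hS 0, hS0, hx0]; ring
  have hx1 : x 1 = 4 := by
    rw [hx 1, hR1, hS1]
    apply floor_div_eq <;> push_cast <;> nlinarith [hs, hs0]
  have hR2 : R 2 = 51 := by rw [hR 1, hR1, hx1]; ring
  have hS2 : S 2 = 36 := by rw [hS 1, hS1, hx1]; ring
  have hx2 : x 2 = 4 := by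
    rw [hx 2, hR2, hS2]
    apply floor_div_eq <;> push_cast <;> nlinarith [hs, hs0]
  refine ⟨hx0, hx1, hx2, fun h => ?_⟩
  have := h (show (1:ℕ) < 2 by norm_num)
  omega
end

section
/- Among all pairs of positive integers (R₀, S₀) with S₀ < 106 and R₀/S₀ > π, the genitor g_π(R₀, S₀) = ⌊(π − 3)/(R₀ − πS₀)⌋ is positive if and only if (R₀, S₀) = (22k, 7k) for some k ∈ {1, …, 15}. -/
/-!
The genitor is positive exactly when `R - πS ≤ π - 3`. The convergents `333/106` and `22/7` of `π`
are Farey neighbours (`22 · 106 - 7 · 333 = 1`), so a fraction `R/S > π` with `S < 113` satisfies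
`R/S ≥ 22/7`; if `R/S > 22/7` then already `R - πS ≥ 1/7 > π - 3`. Hence `(R, S) = (22k, 7k)`, and
then the condition reads `(22k + 3)/(7k + 1) ≤ π`, which holds exactly for `k ≤ 15` because
`333/106 < π < 355/113`.
-/

open Real

theorem floor_div_pos_iff {x d : ℝ} (hd : 0 < d) : 0 < ⌊x / d⌋ ↔ d ≤ x :=
  Int.floor_pos.trans (one_le_div hd)

theorem add_le_of_between_farey_neighbours {a b c d p q : ℤ} (hb : 0 ≤ b) (hd : 0 ≤ d)
    (hdet : b * c - a * d = 1) (hlow : a * q < p * b) (hup : p * d < c * q) : b + d ≤ q := by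
  have hq : q = b * (c * q - p * d) + d * (p * b - a * q) := by linear_combination -q * hdet
  nlinarith

theorem pi_gt_333_div_106 : (333 : ℝ) / 106 < π :=
  lt_of_le_of_lt (by norm_num) pi_gt_d6

theorem pi_lt_355_div_113 : π < 355 / 113 :=
  lt_of_lt_of_le pi_lt_d20 (by norm_num)

theorem twentytwo_mul_le_seven_mul_of_pi_lt_div {R S : ℤ} (hS : 0 < S) (hS113 : S < 113)
    (hRS : π < (R : ℝ) / S) : 22 * S ≤ 7 * R := by
  by_contra! h
  have hS' : (0 : ℝ) < S := by exact_mod_cast hS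
  have hlow : (333 : ℝ) * S < R * 106 := by
    have := (lt_div_iff₀ hS').mp hRS
    nlinarith [pi_gt_333_div_106]
  have := add_le_of_between_farey_neighbours (a := 333) (b := 106) (c := 22) (d := 7)
    (by norm_num) (by norm_num) (by norm_num) (by exact_mod_cast hlow) (by linarith)
  omega

theorem pi_sub_three_lt_sub_pi_mul_of_twentytwo_mul_lt {R S : ℤ} (hS : 0 ≤ S)
    (h : 22 * S < 7 * R) : π - 3 < R - π * S := by
  have h' : (22 : ℝ) * S + 1 ≤ 7 * R := by exact_mod_cast h
  have hS' : (0 : ℝ) ≤ S := by exact_mod_cast hS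
  nlinarith [pi_lt_355_div_113]

theorem twentytwo_mul_sub_pi_mul_le_iff (k : ℤ) :
    22 * (k : ℝ) - π * (7 * k) ≤ π - 3 ↔ k ≤ 15 := by
  have h22 : 0 < 22 - 7 * π := by linarith [pi_lt_355_div_113]
  constructor
  · intro h
    by_contra! hk
    have hk' : (16 : ℝ) ≤ k := by exact_mod_cast hk
    nlinarith [pi_lt_355_div_113]
  · intro hk
    have hk' : (k : ℝ) ≤ 15 := by exact_mod_cast hk
    nlinarith [pi_gt_333_div_106]

theorem kochanski_initial_values_general (R S : ℤ) (hS : 0 < S)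
    (hS106 : S < 106) (hRS : π < (R : ℝ) / (S : ℝ)) :
    0 < ⌊(π - 3) / ((R : ℝ) - π * (S : ℝ))⌋ ↔
      ∃ k : ℤ, 1 ≤ k ∧ k ≤ 15 ∧ R = 22 * k ∧ S = 7 * k := by
  have hpos : 0 < (R : ℝ) - π * S := by
    have := (lt_div_iff₀ (by exact_mod_cast hS : (0 : ℝ) < S)).mp hRS
    linarith
  rw [floor_div_pos_iff hpos]
  constructor
  · intro h
    have hle := twentytwo_mul_le_seven_mul_of_pi_lt_div hS (by omega) hRS
    have heq : 7 * R = 22 * S := by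
      by_contra hne
      exact (pi_sub_three_lt_sub_pi_mul_of_twentytwo_mul_lt hS.le (by omega)).not_ge h
    obtain ⟨k, rfl, rfl⟩ : ∃ k, R = 22 * k ∧ S = 7 * k := ⟨R - 3 * S, by omega, by omega⟩
    push_cast at h
    exact ⟨k, by omega, (twentytwo_mul_sub_pi_mul_le_iff k).mp h, rfl, rfl⟩
  · rintro ⟨k, -, hk, rfl, rfl⟩
    push_cast
    exact (twentytwo_mul_sub_pi_mul_le_iff k).mpr hk

theorem kochanski_initial_values (R S : ℤ) (hR : 0 < R) (hS : 0 < S)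
    (hS106 : S < 106) (hRS : π < (R : ℝ) / (S : ℝ)) :
    0 < ⌊(π - 3) / ((R : ℝ) - π * (S : ℝ))⌋ ↔
      ∃ k : ℤ, 1 ≤ k ∧ k ≤ 15 ∧ R = 22 * k ∧ S = 7 * k :=
  kochanski_initial_values_general R S hS hS106 hRS
end
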